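/- Let n ≥ 1 and let F be a subfield of the cyclotomic field ℚ_n with ℚ ⊆ F. Then there exist a finite solvable group G and an irreducible character χ of G such that ℚ(χ) = F and χ(1) = [ℚ_n : F]. -/

import Mathlib

/-!
Let `H = Gal(ℚ_n/F)`; it acts faithfully on `ℤ/n` through its action on `ζ = e^{2πi/n}`, via
`t : H ↪ (ℤ/n)ˣ`. Induce the character `a ↦ ζ^a` of `ℤ/n` to `G = ℤ/n ⋊ H`. Its conjugates
`a ↦ ζ^{t(τ) a}` are pairwise distinct, so the induced representation is irreducible, of degree
`|H| = [ℚ_n : F]`. Its character vanishes off `ℤ/n` and equals `∑_τ τ(ζ^a) = Tr_{ℚ_n/F}(ζ^a)` at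
`a ∈ ℤ/n`. These values lie in `F`, and they span `F` over `ℚ` because the `ζ^a` span `ℚ_n` and
the trace is onto `F`. Finally `G` is solvable, as `ℤ/n` and `H ≤ (ℤ/n)ˣ` are abelian.
-/

open scoped BigOperators
open Matrix

/-- The `n`-th cyclotomic field `ℚ_n = ℚ(e^{2πi/n})`, as a subfield of `ℂ`. -/
noncomputable def cyclotomicField' (n : ℕ) : IntermediateField ℚ ℂ :=
  IntermediateField.adjoin ℚ {Complex.exp (2 * Real.pi * Complex.I / n)}

/-- The field of values `ℚ(χ)` of the character `χ` of a complex representation `V`: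
the subfield of `ℂ` generated over `ℚ` by all character values. -/
noncomputable def FDRep.fieldOfValues {G : Type} [Monoid G] (V : FDRep ℂ G) :
    IntermediateField ℚ ℂ :=
  IntermediateField.adjoin ℚ (Set.range V.character)

/-- The conductor of a subfield `F` of `ℂ` (contained in some cyclotomic field):
the least `n ≥ 1` with `F ⊆ ℚ_n`. -/
noncomputable def fieldConductor (F : IntermediateField ℚ ℂ) : ℕ :=
  sInf {n : ℕ | 0 < n ∧ F ≤ cyclotomicField' n}

/-- The relative degree `[E : F]` of abelian number fields inside `ℂ`.  For `F ≤ E`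
with `E` finite-dimensional over `ℚ` (the only case used below), this equals the
usual relative degree, by the tower law. -/
noncomputable def rdeg (F E : IntermediateField ℚ ℂ) : ℕ :=
  Module.finrank ℚ E / Module.finrank ℚ F

/-- Bundled data of an irreducible complex character: a finite group `carrier`
together with an irreducible (simple) finite-dimensional complex representation
`rep`; the character is `rep.character`, its degree `χ(1)` is `Module.finrank ℂ rep`. -/
structure IrrChar : Type 1 where
  carrier : Type
  [group : Group carrier]
  [finite : Finite carrier]
  rep : FDRep ℂ carrier
  simple : CategoryTheory.Simple rep

attribute [instance] IrrChar.group IrrChar.finite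

open CategoryTheory Multiplicative SemidirectProduct

instance SemidirectProduct.instFinite {N G : Type*} [Group N] [Group G] [Finite N] [Finite G]
    {φ : G →* MulAut N} : Finite (N ⋊[φ] G) :=
  Finite.of_equiv _ equivProd.symm

instance SemidirectProduct.isSolvable {N G : Type*} [Group N] [Group G] [Group.IsSolvable N]
    [Group.IsSolvable G] {φ : G →* MulAut N} : Group.IsSolvable (N ⋊[φ] G) :=
  Group.isSolvable_of_ker_le_range inl rightHom range_inl_eq_ker_rightHom.ge

universe u

theorem FDRep.injective_hom_of_mono {k G : Type u} [Field k] [Monoid G] {X Y : FDRep k G}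
    (f : X ⟶ Y) [Mono f] : Function.Injective f.hom := by
  have : Mono ((Action.forget (FGModuleCat k) G).map f) := Functor.map_mono _ f
  have : Mono ((forget₂ (FGModuleCat k) (ModuleCat k)).map
      ((Action.forget (FGModuleCat k) G).map f)) := Functor.map_mono _ _
  exact (ModuleCat.mono_iff_injective _).1 this

theorem FDRep.simple_of_isIrreducible {k G V : Type u} [Field k] [Monoid G] [AddCommGroup V]
    [Module k V] [FiniteDimensional k V] (ρ : Representation k G V) [ρ.IsIrreducible] :
    Simple (FDRep.of ρ) where
  mono_isIso_iff_nonzero {Y} f _ := by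
    refine ⟨fun _ hf ↦ ?_, fun hf ↦ ?_⟩
    · have : Nontrivial V := IsSimpleModule.nontrivial (MonoidAlgebra k G) ρ.asModule
      have h : 𝟙 (FDRep.of ρ) = 0 := by simp [← IsIso.inv_hom_id f, hf]
      obtain ⟨v, hv⟩ := exists_ne (0 : V)
      exact hv congr(($h).hom v)
    · let W : Subrepresentation ρ :=
        ⟨LinearMap.range (ConcreteCategory.hom f.hom : Y.V →ₗ[k] V),
          by rintro g _ ⟨v, rfl⟩; exact ⟨Y.ρ g v, congr($(f.comm g) v)⟩⟩
      have hW : W = ⊤ := by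
        refine (IsSimpleOrder.eq_bot_or_eq_top W).resolve_left fun h ↦ hf ?_
        ext v
        have : f.hom v ∈ W := ⟨v, rfl⟩
        rw [h] at this
        exact this
      have hsurj : Function.Surjective f.hom := LinearMap.range_eq_top.1 congr(($hW).toSubmodule)
      have : IsIso f.hom :=
        (ConcreteCategory.isIso_iff_bijective _).2 ⟨injective_hom_of_mono f, hsurj⟩
      exact Action.isIso_of_hom_isIso f

section InducedAddChar

variable {R H k : Type} [CommRing R] [Group H] [Field k]

def mulAutOfUnits (t : H →* Rˣ) : H →* MulAut (Multiplicative R) where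
  toFun τ := AddEquiv.toMultiplicative (DistribMulAction.toAddAut Rˣ R (t τ))
  map_one' := by ext; simp
  map_mul' _ _ := by ext; simp [mul_smul]

@[simp]
lemma toAdd_mulAutOfUnits_apply (t : H →* Rˣ) (τ : H) (x : Multiplicative R) :
    (mulAutOfUnits t τ x).toAdd = t τ * x.toAdd := rfl

/-- The representation of `R ⋊ H` induced from the character `ψ` of `R`, realised on `H → k`. -/
def inducedAddCharRep (ψ : AddChar R k) (t : H →* Rˣ) :
    Representation k (Multiplicative R ⋊[mulAutOfUnits t] H) (H → k) where
  toFun g :=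
    { toFun f τ := ψ (t τ * g.left.toAdd) * f (τ * g.right)
      map_add' _ _ := by funext; simp [mul_add]
      map_smul' _ _ := by funext; simp only [Pi.smul_apply, smul_eq_mul, RingHom.id_apply]; ring }
  map_one' := by ext; simp
  map_mul' g g' := by
    ext f τ
    simp [AddChar.map_add_eq_mul, mul_add, mul_assoc]

variable (ψ : AddChar R k) (t : H →* Rˣ)

@[simp]
lemma inducedAddCharRep_apply (g) (f : H → k) (τ : H) :
    inducedAddCharRep ψ t g f τ = ψ (t τ * g.left.toAdd) * f (τ * g.right) := rfl

lemma character_inducedAddCharRep [Fintype H] [DecidableEq H] (g) :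
    (FDRep.of (inducedAddCharRep ψ t)).character g =
      if g.right = 1 then ∑ τ, ψ (t τ * g.left.toAdd) else 0 := by
  rw [FDRep.character, FDRep.of_ρ', LinearMap.trace_eq_matrix_trace k (Pi.basisFun k H),
    LinearMap.toMatrix_eq_toMatrix', Matrix.trace]
  split_ifs with hg
  · simp [hg]
  · refine Finset.sum_eq_zero fun τ _ ↦ ?_
    simp [hg]

lemma inducedAddCharRep_inr_single [DecidableEq H] (h τ : H) :
    inducedAddCharRep ψ t (inr h) (Pi.single τ 1) = Pi.single (τ * h⁻¹) 1 := by
  ext σ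
  simp [Pi.single_apply, eq_mul_inv_iff_mul_eq]

/-- Orthogonality of the characters `a ↦ ψ (t τ * a)` of `R`, which are pairwise distinct. -/
lemma sum_addChar_smul_inducedAddCharRep_inl [Fintype R] [DecidableEq R] [DecidableEq H]
    (hψ : ψ.IsPrimitive) (ht : Function.Injective t) (f : H → k) (τ₀ : H) :
    ∑ a : R, ψ (-(t τ₀ * a)) • inducedAddCharRep ψ t (inl (ofAdd a)) f =
      (Fintype.card R * f τ₀) • Pi.single τ₀ 1 := by
  ext τ
  have hsum : ∑ a : R, ψ (-(t τ₀ * a)) * ψ (t τ * a) =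
      if (t τ - t τ₀ : R) = 0 then (Fintype.card R : k) else 0 := by
    calc _ = ∑ a : R, ψ (a * (t τ - t τ₀)) :=
          Finset.sum_congr rfl fun a _ ↦ by rw [← AddChar.map_add_eq_mul]; ring_nf
      _ = _ := by rw [AddChar.sum_mulShift _ hψ]; split_ifs <;> simp
  have htt : (t τ - t τ₀ : R) = 0 ↔ τ = τ₀ := by
    rw [sub_eq_zero, Units.val_inj, ht.eq_iff]
  simp only [Finset.sum_apply, Pi.smul_apply, smul_eq_mul, inducedAddCharRep_apply, left_inl,
    right_inl, toAdd_ofAdd, mul_one, ← mul_assoc, ← Finset.sum_mul, hsum, htt]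
  by_cases h : τ = τ₀ <;> simp [h]

lemma single_mem_of_apply_ne_zero_inducedAddCharRep [Fintype R] [CharZero k] [DecidableEq H]
    (hψ : ψ.IsPrimitive) (ht : Function.Injective t)
    (W : Subrepresentation (inducedAddCharRep ψ t)) {f : H → k} (hf : f ∈ W.toSubmodule)
    {τ₀ : H} (hτ₀ : f τ₀ ≠ 0) : (Pi.single τ₀ 1 : H → k) ∈ W.toSubmodule := by
  classical
  have hproj := W.toSubmodule.sum_mem (t := Finset.univ) fun a _ ↦
    W.toSubmodule.smul_mem (ψ (-(t τ₀ * a))) (W.apply_mem_toSubmodule (inl (ofAdd a)) hf)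
  rw [sum_addChar_smul_inducedAddCharRep_inl ψ t hψ ht] at hproj
  have hc : (Fintype.card R * f τ₀ : k) ≠ 0 := mul_ne_zero (by simp) hτ₀
  simpa only [inv_smul_smul₀ hc] using W.toSubmodule.smul_mem (Fintype.card R * f τ₀ : k)⁻¹ hproj

lemma eq_top_of_single_mem_inducedAddCharRep [Finite H] [DecidableEq H]
    (W : Subrepresentation (inducedAddCharRep ψ t)) {τ₀ : H}
    (h : (Pi.single τ₀ 1 : H → k) ∈ W.toSubmodule) : W = ⊤ := by
  have : Fintype H := Fintype.ofFinite H
  have hall (τ : H) : (Pi.single τ 1 : H → k) ∈ W.toSubmodule := by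
    have := W.apply_mem_toSubmodule (inr (τ⁻¹ * τ₀)) h
    rwa [inducedAddCharRep_inr_single, show τ₀ * (τ⁻¹ * τ₀)⁻¹ = τ by group] at this
  refine Subrepresentation.toSubmodule_injective (Submodule.eq_top_iff'.2 fun f ↦ ?_)
  rw [← Finset.univ_sum_single f]
  exact Submodule.sum_mem _ fun τ _ ↦ by
    simpa [← Pi.single_smul] using Submodule.smul_mem _ (f τ) (hall τ)

theorem isIrreducible_inducedAddCharRep [Fintype R] [CharZero k] [Finite H] [Nonempty H]
    (hψ : ψ.IsPrimitive) (ht : Function.Injective t) : (inducedAddCharRep ψ t).IsIrreducible := by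
  classical
  refine { exists_pair_ne := ⟨⊥, ⊤, fun h ↦ ?_⟩, eq_bot_or_eq_top := fun W ↦ ?_ }
  · obtain ⟨τ⟩ := ‹Nonempty H›
    have : (Pi.single τ 1 : H → k) ∈ (⊥ : Subrepresentation (inducedAddCharRep ψ t)).toSubmodule :=
      h ▸ trivial
    simpa using congr_fun ((Submodule.mem_bot k).1 this) τ
  · refine or_iff_not_imp_left.2 fun hW ↦ ?_
    obtain ⟨f, hfW, hf⟩ := Submodule.exists_mem_ne_zero_of_ne_bot
      fun h ↦ hW (Subrepresentation.toSubmodule_injective h)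
    obtain ⟨τ₀, hτ₀⟩ := Function.ne_iff.1 hf
    exact eq_top_of_single_mem_inducedAddCharRep ψ t W
      (single_mem_of_apply_ne_zero_inducedAddCharRep ψ t hψ ht W hfW hτ₀)

end InducedAddChar

section Cyclotomic

variable {n : ℕ} [NeZero n] {K L : Type*} [Field K] [Field L] [Algebra K L] {ζ : L}

lemma IsPrimitiveRoot.autToPow_injective_of_isCyclotomicExtension [IsCyclotomicExtension {n} K L]
    (hζ : IsPrimitiveRoot ζ n) (E : IntermediateField K L) :
    Function.Injective (hζ.autToPow E) := fun σ σ' h ↦ by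
  refine AlgEquiv.restrictScalars_injective K (IsCyclotomicExtension.algEquiv_eq_of_apply_eq {n} K L
    fun m hm _ ↦ ⟨ζ, Set.mem_singleton_iff.1 hm ▸ hζ, ?_⟩)
  simpa only [hζ.autToPow_spec E, AlgEquiv.restrictScalars_apply] using congr(ζ ^ ($h : ZMod n).val)

lemma IsPrimitiveRoot.apply_zmodChar (hζ : IsPrimitiveRoot ζ n) (σ : L ≃ₐ[K] L) (a : ZMod n) :
    σ (AddChar.zmodChar n hζ.pow_eq_one a) =
      AddChar.zmodChar n hζ.pow_eq_one (hζ.autToPow K σ * a) := by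
  conv_rhs => rw [← ZMod.natCast_zmod_val (hζ.autToPow K σ : ZMod n), ← ZMod.natCast_zmod_val a,
    ← Nat.cast_mul, AddChar.zmodChar_apply']
  rw [AddChar.zmodChar_apply, map_pow, ← hζ.autToPow_spec K σ, ← pow_mul]

lemma IsPrimitiveRoot.span_range_zmodChar [IsCyclotomicExtension {n} K L]
    (hζ : IsPrimitiveRoot ζ n) :
    Submodule.span K (Set.range (AddChar.zmodChar n hζ.pow_eq_one)) = ⊤ := by
  rw [eq_top_iff, ← Algebra.top_toSubmodule,
    ← IsCyclotomicExtension.adjoin_primitive_root_eq_top hζ, Algebra.adjoin_eq_span,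
    Submodule.span_le]
  intro x hx
  obtain ⟨k, rfl⟩ := Submonoid.mem_closure_singleton.1 hx
  exact Submodule.subset_span ⟨k, AddChar.zmodChar_apply' _ k⟩

end Cyclotomic

lemma rdeg_lift {M : IntermediateField ℚ ℂ} [FiniteDimensional ℚ M] (E : IntermediateField ℚ M) :
    rdeg (IntermediateField.lift E) M = Module.finrank E M := by
  rw [rdeg, ← (IntermediateField.liftAlgEquiv E).toLinearEquiv.finrank_eq,
    ← Module.finrank_mul_finrank ℚ E M]
  exact Nat.mul_div_cancel_left _ Module.finrank_pos

lemma range_coe_trace_eq_lift {M : IntermediateField ℚ ℂ} [FiniteDimensional ℚ M]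
    (E : IntermediateField ℚ M) :
    Set.range (fun y : M ↦ ((algebraMap E M (Algebra.trace E M y) : M) : ℂ)) =
      IntermediateField.lift E := by
  ext x
  refine ⟨?_, ?_⟩
  · rintro ⟨y, rfl⟩
    exact (IntermediateField.mem_lift _).2 (Algebra.trace E M y).2
  · rintro ⟨z, hz, rfl⟩
    obtain ⟨y, hy⟩ := Algebra.trace_surjective E M ⟨z, hz⟩
    exact ⟨y, by simp only [hy]; rfl⟩

namespace cyclotomicField'

variable (n : ℕ) [NeZero n]

lemma isPrimitiveRoot_exp : IsPrimitiveRoot (Complex.exp (2 * Real.pi * Complex.I / n)) n :=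
  Complex.isPrimitiveRoot_exp n (NeZero.ne n)

noncomputable def zeta : cyclotomicField' n :=
  ⟨_, IntermediateField.mem_adjoin_simple_self ℚ (Complex.exp (2 * Real.pi * Complex.I / n))⟩

lemma isPrimitiveRoot_zeta : IsPrimitiveRoot (zeta n) n :=
  IsPrimitiveRoot.coe_submonoidClass_iff.1 (isPrimitiveRoot_exp n)

instance : IsCyclotomicExtension {n} ℚ (cyclotomicField' n) :=
  (IntermediateField.isCyclotomicExtension_singleton_iff_eq_adjoin n ℚ ℂ _
    (isPrimitiveRoot_exp n)).2 rfl

instance : FiniteDimensional ℚ (cyclotomicField' n) :=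
  IsCyclotomicExtension.finiteDimensional {n} ℚ _

instance : IsGalois ℚ (cyclotomicField' n) :=
  IsCyclotomicExtension.isGalois {n} ℚ _

lemma stdAddChar_eq_zmodChar : (ZMod.stdAddChar : AddChar (ZMod n) ℂ) =
    AddChar.zmodChar n (isPrimitiveRoot_exp n).pow_eq_one := by
  ext a
  rw [AddChar.zmodChar_apply, ZMod.stdAddChar_apply, ZMod.toCircle_apply, ← Complex.exp_nat_mul]
  congr 1
  ring

variable {n} (E : IntermediateField ℚ (cyclotomicField' n))

noncomputable abbrev galoisToUnits :
    (cyclotomicField' n ≃ₐ[E] cyclotomicField' n) →* (ZMod n)ˣ :=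
  (isPrimitiveRoot_zeta n).autToPow E

open Classical in
lemma character_inducedAddCharRep_galoisToUnits (g) :
    (FDRep.of (inducedAddCharRep ZMod.stdAddChar (galoisToUnits E))).character g =
      if g.right = 1 then
        ((algebraMap E (cyclotomicField' n)
          (Algebra.trace E (cyclotomicField' n)
            (AddChar.zmodChar n (isPrimitiveRoot_zeta n).pow_eq_one g.left.toAdd)) :
          cyclotomicField' n) : ℂ)
      else 0 := by
  rw [character_inducedAddCharRep, stdAddChar_eq_zmodChar, trace_eq_sum_automorphisms]
  congr 1
  rw [IntermediateField.coe_sum]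
  refine Finset.sum_congr rfl fun σ _ ↦ ?_
  rw [IsPrimitiveRoot.apply_zmodChar, AddChar.zmodChar_apply, AddChar.zmodChar_apply,
    SubmonoidClass.coe_pow]
  rfl

lemma fieldOfValues_inducedAddCharRep_galoisToUnits :
    (FDRep.of (inducedAddCharRep ZMod.stdAddChar (galoisToUnits E))).fieldOfValues =
      IntermediateField.lift E := by
  classical
  let trace : cyclotomicField' n →ₗ[ℚ] ℂ := (cyclotomicField' n).val.toLinearMap ∘ₗ
    (Algebra.linearMap E (cyclotomicField' n)).restrictScalars ℚ ∘ₗ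
    (Algebra.trace E (cyclotomicField' n)).restrictScalars ℚ
  have hrange : Set.range trace = IntermediateField.lift E := range_coe_trace_eq_lift E
  apply le_antisymm
  · rw [FDRep.fieldOfValues, IntermediateField.adjoin_le_iff]
    rintro _ ⟨g, rfl⟩
    rw [character_inducedAddCharRep_galoisToUnits]
    split_ifs
    · exact hrange ▸ ⟨_, rfl⟩
    · exact zero_mem _
  · intro x hx
    obtain ⟨y, rfl⟩ : x ∈ Set.range trace := hrange ▸ hx
    have hy := Submodule.mem_map_of_mem (f := trace)
      ((isPrimitiveRoot_zeta n).span_range_zmodChar (K := ℚ) ▸ Submodule.mem_top (x := y))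
    rw [Submodule.map_span] at hy
    refine (Submodule.span_le (p := (IntermediateField.adjoin ℚ _).toSubalgebra.toSubmodule)).2
      ?_ hy
    rintro _ ⟨_, ⟨a, rfl⟩, rfl⟩
    refine IntermediateField.subset_adjoin ℚ _ ⟨inl (ofAdd a), ?_⟩
    rw [character_inducedAddCharRep_galoisToUnits]
    simp only [right_inl, ↓reduceIte, left_inl, toAdd_ofAdd]
    rfl

end cyclotomicField'

open cyclotomicField' in
/-- Lemma 2.3.  For `ℚ ⊆ F ⊆ ℚ_n` there is a finite solvable group
`G` and `χ ∈ Irr(G)` with `ℚ(χ) = F` and `χ(1) = [ℚ_n : F]`. -/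
theorem stmt_12 (n : ℕ) (hn : 1 ≤ n) (F : IntermediateField ℚ ℂ)
    (hF : F ≤ cyclotomicField' n) :
    ∃ χ : IrrChar, IsSolvable χ.carrier ∧ χ.rep.fieldOfValues = F ∧
      Module.finrank ℂ χ.rep = rdeg F (cyclotomicField' n) := by
  have : NeZero n := ⟨by omega⟩
  obtain ⟨E, rfl⟩ : ∃ E : IntermediateField ℚ (cyclotomicField' n), IntermediateField.lift E = F :=
    ⟨_, IntermediateField.lift_restrict hF⟩
  have ht := (isPrimitiveRoot_zeta n).autToPow_injective_of_isCyclotomicExtension E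
  have : (inducedAddCharRep ZMod.stdAddChar (galoisToUnits E)).IsIrreducible :=
    isIrreducible_inducedAddCharRep _ _ (ZMod.isPrimitive_stdAddChar n) ht
  have : Group.IsSolvable (cyclotomicField' n ≃ₐ[E] cyclotomicField' n) :=
    Group.isSolvable_of_isSolvable_injective ht
  refine ⟨⟨_, _, FDRep.simple_of_isIrreducible
      (inducedAddCharRep ZMod.stdAddChar (galoisToUnits E))⟩,
    SemidirectProduct.isSolvable, fieldOfValues_inducedAddCharRep_galoisToUnits E, ?_⟩
  rw [rdeg_lift, ← IsGalois.card_aut_eq_finrank, Nat.card_eq_fintype_card]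
  exact Module.finrank_fintype_fun_eq_card ℂ
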